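/- arXiv:1212.2336 — 2 statements merged into one kernel-verified Lean document; each statement's English description precedes it below -/
import Mathlib

section
/- Let t, t', t'' be three pairwise distinct transpositions of S_{n+1}, no two of which commute, and such that t'' = t t' t (equivalently t'' = t' t t'). Then V_t ∩ V_{t'} = V_t ∩ H_{t''} = V_{t'} ∩ H_{t''}. In particular V_t ∩ (V_{t'} ∪ V_{t''}) = V_t. -/
/-! Basic setup: type A_n geometric representation, Weyl lines, combinatorics. -/

namespace TLpaper

/-- A permutation is a transposition. -/
def IsTransposition {α : Type} [DecidableEq α] (σ : Equiv.Perm α) : Prop :=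
  ∃ a b, a ≠ b ∧ σ = Equiv.swap a b

variable (k : Type) [Field k] [CharZero k] (n : ℕ)

/-- The reflecting hyperplane of a permutation `t` inside `V = {x | ∑ x i = 0}`:
the set of points of `V` fixed by permuting the coordinates by `t`.  For a
transposition `t = (a b)` this is `{x ∈ V | x a = x b}`. -/
def Hyp (t : Equiv.Perm (Fin (n + 1))) : Set (Fin (n + 1) → k) :=
  {x | (∑ i, x i) = 0 ∧ ∀ i, x (t i) = x i}

/-- A Weyl line: a one-dimensional linear subspace of `V` which is an
intersection of a (possibly empty) family of reflecting hyperplanes. -/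
def IsWeylLine (L : Set (Fin (n + 1) → k)) : Prop :=
  (∃ v : Fin (n + 1) → k, v ≠ 0 ∧ L = Set.range fun c : k => c • v) ∧
  ∃ T : Set (Equiv.Perm (Fin (n + 1))),
    (∀ t ∈ T, IsTransposition t) ∧
    L = {x | (∑ i, x i) = 0} ∩ ⋂ t ∈ T, Hyp k n t

/-- `Z`: the union of all Weyl lines. -/
def ZZ : Set (Fin (n + 1) → k) := ⋃ L ∈ {L | IsWeylLine k n L}, L

/-- `V_t`: the union of all Weyl lines transverse to `t` (i.e. not contained in `H_t`). -/
def Vt (t : Equiv.Perm (Fin (n + 1))) : Set (Fin (n + 1) → k) :=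
  ⋃ L ∈ {L | IsWeylLine k n L ∧ ¬L ⊆ Hyp k n t}, L

/-- The simple transposition `s_i = (i, i+1)` (0-indexed: it swaps coordinates
`i` and `i+1` of `Fin (n+1)`, for `i < n`). -/
def simple (i : ℕ) : Equiv.Perm (Fin (n + 1)) :=
  Equiv.swap (Fin.ofNat (n + 1) i) (Fin.ofNat (n + 1) (i + 1 : ℕ))

/-- `V_i := V_{s_i}`. -/
def Vi (i : ℕ) : Set (Fin (n + 1) → k) := Vt k n (simple n i)

/-- The action of a permutation on a subset of `k^{n+1}` (permuting coordinates). -/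
def permSet (σ : Equiv.Perm (Fin (n + 1))) (W : Set (Fin (n + 1) → k)) :
    Set (Fin (n + 1) → k) :=
  (fun x => x ∘ σ) '' W

/-- `i · W := V_i ∩ (W ∪ s_i (W))`. -/
def dotAct (i : ℕ) (W : Set (Fin (n + 1) → k)) : Set (Fin (n + 1) → k) :=
  Vi k n i ∩ (W ∪ permSet k n (simple n i) W)

/-- The set `W_{i_1 ⋯ i_m}` associated with a sequence of indices. -/
def seqSet : List ℕ → Set (Fin (n + 1) → k)
  | [] => ZZ k n
  | [i] => Vi k n i
  | i :: j :: l => dotAct k n i (seqSet (j :: l))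

/-- Membership in the family `𝒱_n`. -/
def memVn (W : Set (Fin (n + 1) → k)) : Prop :=
  ∃ l : List ℕ, l ≠ [] ∧ (∀ i ∈ l, i < n) ∧ W = seqSet k n l

/-- A set of pairwise commuting transpositions. -/
def CommTranspositions (Q : Set (Equiv.Perm (Fin (n + 1)))) : Prop :=
  (∀ t ∈ Q, IsTransposition t) ∧ ∀ t ∈ Q, ∀ t' ∈ Q, t * t' = t' * t

/-! Write `t = (a b)` and `t' = (b c)`, so that `t'' = (a c)`. The coordinates of a point `x` of a
Weyl line `L` take at most two values: if `x p`, `x q`, `x r` were distinct, a function of the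
coordinates of `x` that vanishes on the level set of `x r` but not on that of `x p` would again lie
on the line `L`, forcing `x r = 0`; exchanging the roles of `q` and `r` gives `x q = 0` as well.
For `x ≠ 0` on `L`, `L ⊆ H_(p q)` exactly when `x p = x q`, so `x ∈ V_(p q)` iff `x ∈ Z` and
`x p ≠ x q` (and `0` lies in every `V_t`). All three identities then follow from the fact that two
of `x a`, `x b`, `x c` coincide. -/

theorem exists_swap_eq_of_mul_ne {α : Type} [DecidableEq α] {t t' : Equiv.Perm α}
    (ht : IsTransposition t) (ht' : IsTransposition t') (hc : t * t' ≠ t' * t) :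
    ∃ a b c, a ≠ b ∧ b ≠ c ∧ a ≠ c ∧ t = Equiv.swap a b ∧ t' = Equiv.swap b c := by
  obtain ⟨a, b, hab, rfl⟩ := ht
  obtain ⟨c, d, hcd, rfl⟩ := ht'
  rcases eq_or_ne c a with rfl | hca
  · exact ⟨b, c, d, hab.symm, hcd, fun hbd => hc (by subst hbd; rfl), Equiv.swap_comm _ _, rfl⟩
  rcases eq_or_ne c b with rfl | hcb
  · exact ⟨a, c, d, hab, hcd, fun had => hc (by subst had; rw [Equiv.swap_comm c]), rfl, rfl⟩
  rcases eq_or_ne d a with rfl | hda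
  · exact ⟨b, d, c, hab.symm, hca.symm, hcb.symm, Equiv.swap_comm _ _, Equiv.swap_comm _ _⟩
  rcases eq_or_ne d b with rfl | hdb
  · exact ⟨a, d, c, hab, hcb.symm, hca.symm, rfl, Equiv.swap_comm _ _⟩
  have hnodup : [a, b, c, d].Nodup := by simp [*, hca.symm, hcb.symm, hda.symm, hdb.symm]
  exact absurd (Equiv.Perm.disjoint_swap_swap hnodup).commute.eq hc

section

variable {k : Type} [Field k] {n : ℕ}

theorem mem_Hyp_swap_iff {p q : Fin (n + 1)} {x : Fin (n + 1) → k} :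
    x ∈ Hyp k n (Equiv.swap p q) ↔ ∑ i, x i = 0 ∧ x p = x q := by
  refine and_congr_right fun _ => ⟨fun h => by simpa using (h p).symm, fun h i => ?_⟩
  rcases eq_or_ne i p with rfl | hip
  · simpa using h.symm
  rcases eq_or_ne i q with rfl | hiq
  · simpa using h
  · rw [Equiv.swap_apply_of_ne_of_ne hip hiq]

theorem sum_eq_of_forall_ne_eq {R : Type*} [NonAssocSemiring R] {x : Fin (n + 1) → R}
    {p : Fin (n + 1)} {c : R} (h : ∀ i ≠ p, x i = c) : ∑ i, x i = x p + n * c := by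
  rw [Fintype.sum_eq_add_sum_compl p, Finset.sum_congr rfl fun i hi => h i (by simpa using hi),
    Finset.sum_const, Finset.card_compl, Finset.card_singleton, Fintype.card_fin, nsmul_eq_mul]
  simp

namespace IsWeylLine

variable {L : Set (Fin (n + 1) → k)} {x y : Fin (n + 1) → k}

theorem zero_mem (hL : IsWeylLine k n L) : (0 : Fin (n + 1) → k) ∈ L := by
  obtain ⟨⟨v, -, rfl⟩, -⟩ := hL
  exact ⟨0, zero_smul k v⟩

theorem sum_eq_zero (hL : IsWeylLine k n L) (hx : x ∈ L) : ∑ i, x i = 0 := by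
  obtain ⟨-, T, -, rfl⟩ := hL
  exact hx.1

theorem exists_eq_smul (hL : IsWeylLine k n L) (hx : x ∈ L) (hx0 : x ≠ 0) (hy : y ∈ L) :
    ∃ c : k, y = c • x := by
  obtain ⟨⟨v, -, rfl⟩, -⟩ := hL
  obtain ⟨a, rfl⟩ := hx
  obtain ⟨b, rfl⟩ := hy
  have ha : a ≠ 0 := by rintro rfl; simp at hx0
  exact ⟨b / a, by rw [smul_smul, div_mul_cancel₀ b ha]⟩

/-- The hyperplanes cutting out `L` impose only equalities between coordinates, which `f`
preserves. -/
theorem comp_mem (hL : IsWeylLine k n L) (hx : x ∈ L) {f : k → k}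
    (hf : ∑ i, f (x i) = 0) : f ∘ x ∈ L := by
  obtain ⟨-, T, -, rfl⟩ := hL
  refine ⟨hf, Set.mem_iInter₂.2 fun t ht => ⟨hf, fun i => ?_⟩⟩
  simp only [Function.comp_apply, ((Set.mem_iInter₂.1 hx.2) t ht).2 i]

theorem subset_Hyp_swap (hL : IsWeylLine k n L) (hx : x ∈ L) (hx0 : x ≠ 0)
    {p q : Fin (n + 1)} (hpq : x p = x q) : L ⊆ Hyp k n (Equiv.swap p q) := by
  intro y hy
  obtain ⟨c, rfl⟩ := hL.exists_eq_smul hx hx0 hy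
  exact mem_Hyp_swap_iff.2 ⟨hL.sum_eq_zero hy, by simp [hpq]⟩

theorem eq_zero_of_three_values [CharZero k] (hL : IsWeylLine k n L) (hx : x ∈ L)
    {p q r : Fin (n + 1)} (hpq : x p ≠ x q) (hpr : x p ≠ x r) (hqr : x q ≠ x r) :
    x r = 0 := by
  classical
  set A := Finset.univ.filter fun i => x i = x p
  set B := Finset.univ.filter fun i => x i = x q
  have hB : (B.card : k) ≠ 0 :=
    Nat.cast_ne_zero.2 (Finset.card_ne_zero_of_mem (a := q) (by simp [B]))
  -- weights `#B` on the level set of `x p` and `-#A` on that of `x q` balance to sum zero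
  let f : k → k := fun z => if z = x p then (B.card : k) else if z = x q then -(A.card : k) else 0
  have hf : ∑ i, f (x i) = 0 := by
    have hsplit : ∀ z, f z = (if z = x p then (B.card : k) else 0) +
        (if z = x q then -(A.card : k) else 0) := by
      intro z
      by_cases hz : z = x p
      · simp [f, hz, hpq]
      · simp [f, hz]
    simp only [hsplit, Finset.sum_add_distrib, ← Finset.sum_filter, Finset.sum_const,
      nsmul_eq_mul, A, B]
    ring
  have hx0 : x ≠ 0 := fun h => hpq (by simp [h])
  obtain ⟨c, hc⟩ := hL.exists_eq_smul hx hx0 (hL.comp_mem hx hf)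
  have hcp : c * x p = B.card := by simpa [f] using (congrFun hc p).symm
  have hcr : c * x r = 0 := by simpa [f, hpr.symm, hqr.symm] using (congrFun hc r).symm
  exact (mul_eq_zero.1 hcr).resolve_left fun h => hB (by rw [← hcp, h, zero_mul])

theorem eq_or_eq_or_eq [CharZero k] (hL : IsWeylLine k n L) (hx : x ∈ L) (p q r : Fin (n + 1)) :
    x p = x q ∨ x q = x r ∨ x p = x r := by
  by_contra! h
  obtain ⟨hpq, hqr, hpr⟩ := h
  exact hqr ((hL.eq_zero_of_three_values hx hpr hpq hqr.symm).trans
    (hL.eq_zero_of_three_values hx hpq hpr hqr).symm)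

end IsWeylLine

theorem isWeylLine_range_smul_ite {p q : Fin (n + 1)} (hpq : p ≠ q) :
    IsWeylLine k n (Set.range fun c : k => c • fun i => if i = p then (n : k) else -1) := by
  set v : Fin (n + 1) → k := fun i => if i = p then (n : k) else -1
  have hv : ∀ i ≠ p, v i = -1 := fun i hi => if_neg hi
  have hsum : ∑ i, v i = 0 := by rw [sum_eq_of_forall_ne_eq hv]; simp [v]
  refine ⟨⟨v, fun h => by simpa [hv q hpq.symm] using congrFun h q, rfl⟩,
    {σ | ∃ i j, i ≠ j ∧ i ≠ p ∧ j ≠ p ∧ σ = Equiv.swap i j}, ?_, ?_⟩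
  · rintro _ ⟨i, j, hij, -, -, rfl⟩
    exact ⟨i, j, hij, rfl⟩
  ext y
  simp only [Set.mem_inter_iff, Set.mem_iInter, Set.mem_ofPred_eq]
  constructor
  · rintro ⟨c, rfl⟩
    have hcsum : ∑ i, (c • v) i = 0 := by simp [← Finset.mul_sum, hsum]
    refine ⟨hcsum, ?_⟩
    rintro _ ⟨i, j, -, hi, hj, rfl⟩
    exact mem_Hyp_swap_iff.2 ⟨hcsum, by simp [hv i hi, hv j hj]⟩
  · rintro ⟨hy, hH⟩
    have hyq : ∀ i ≠ p, y i = y q := fun i hi => by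
      rcases eq_or_ne i q with rfl | hiq
      · rfl
      · exact (mem_Hyp_swap_iff.1 (hH _ ⟨i, q, hiq, hi, hpq.symm, rfl⟩)).2
    rw [sum_eq_of_forall_ne_eq hyq] at hy
    refine ⟨-y q, funext fun i => ?_⟩
    rcases eq_or_ne i p with rfl | hi
    · simp [v]
      linear_combination -hy
    · simp [hv i hi, hyq i hi]

theorem exists_isWeylLine_not_subset_Hyp_swap [CharZero k] {p q : Fin (n + 1)} (hpq : p ≠ q) :
    ∃ L, IsWeylLine k n L ∧ ¬L ⊆ Hyp k n (Equiv.swap p q) := by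
  refine ⟨_, isWeylLine_range_smul_ite hpq, fun h => ?_⟩
  have hvpq := (mem_Hyp_swap_iff.1 (h ⟨1, one_smul k _⟩)).2
  simp only [if_pos, if_neg hpq.symm] at hvpq
  exact Nat.cast_add_one_ne_zero (R := k) n (by linear_combination hvpq)

theorem mem_ZZ_iff {x : Fin (n + 1) → k} :
    x ∈ ZZ k n ↔ ∃ L, IsWeylLine k n L ∧ x ∈ L := by
  simp [ZZ]

theorem mem_Vt_swap_iff [CharZero k] {p q : Fin (n + 1)} (hpq : p ≠ q) {x : Fin (n + 1) → k} :
    x ∈ Vt k n (Equiv.swap p q) ↔ x ∈ ZZ k n ∧ (x p = x q → x = 0) := by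
  simp only [Vt, mem_ZZ_iff, Set.mem_iUnion, Set.mem_ofPred_eq, exists_prop]
  constructor
  · rintro ⟨L, ⟨hL, hLH⟩, hx⟩
    exact ⟨⟨L, hL, hx⟩, fun h => by_contra fun hx0 => hLH (hL.subset_Hyp_swap hx hx0 h)⟩
  · rintro ⟨⟨L, hL, hx⟩, hx0⟩
    by_cases h : x p = x q
    · obtain ⟨L', hL', hL'H⟩ := exists_isWeylLine_not_subset_Hyp_swap (k := k) hpq
      exact ⟨L', ⟨hL', hL'H⟩, hx0 h ▸ hL'.zero_mem⟩
    · exact ⟨L, ⟨hL, fun hLH => h (mem_Hyp_swap_iff.1 (hLH hx)).2⟩, hx⟩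

theorem sum_eq_zero_of_mem_ZZ {x : Fin (n + 1) → k} (hx : x ∈ ZZ k n) : ∑ i, x i = 0 := by
  obtain ⟨L, hL, hxL⟩ := mem_ZZ_iff.1 hx
  exact hL.sum_eq_zero hxL

theorem eq_or_eq_or_eq_of_mem_ZZ [CharZero k] {x : Fin (n + 1) → k} (hx : x ∈ ZZ k n)
    (p q r : Fin (n + 1)) :
    x p = x q ∨ x q = x r ∨ x p = x r := by
  obtain ⟨L, hL, hxL⟩ := mem_ZZ_iff.1 hx
  exact hL.eq_or_eq_or_eq hxL p q r

end

theorem Vt_inter_Vt_eq_inter_Hyp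
    (t t' t'' : Equiv.Perm (Fin (n + 1)))
    (ht : IsTransposition t) (ht' : IsTransposition t')
    (hc : t * t' ≠ t' * t)
    (hconj : t'' = t * t' * t) :
    Vt k n t ∩ Vt k n t' = Vt k n t ∩ Hyp k n t'' ∧
    Vt k n t ∩ Hyp k n t'' = Vt k n t' ∩ Hyp k n t'' ∧
    Vt k n t ∩ (Vt k n t' ∪ Vt k n t'') = Vt k n t := by
  obtain ⟨a, b, c, hab, hbc, hac, rfl, rfl⟩ := exists_swap_eq_of_mul_ne ht ht' hc
  obtain rfl : t'' = Equiv.swap a c := by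
    rw [hconj, Equiv.swap_comm a b, Equiv.swap_comm b c,
      Equiv.swap_mul_swap_mul_swap hbc.symm hac.symm, Equiv.swap_comm]
  have hZ : ∀ x ∈ ZZ k n, ∑ i, x i = 0 ∧ (x a = x b ∨ x b = x c ∨ x a = x c) :=
    fun x hx => ⟨sum_eq_zero_of_mem_ZZ hx, eq_or_eq_or_eq_of_mem_ZZ hx a b c⟩
  clear hconj hc ht ht'
  refine ⟨?_, ?_, ?_⟩ <;> ext x <;> rcases eq_or_ne x 0 with rfl | hx0 <;>
    simp only [Set.mem_inter_iff, Set.mem_union, mem_Vt_swap_iff hab, mem_Vt_swap_iff hbc,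
      mem_Vt_swap_iff hac, mem_Hyp_swap_iff, Pi.zero_apply, Finset.sum_const_zero] <;>
    grind

end TLpaper
end

section
/- Let 1 ≤ j ≤ m ≤ i ≤ n. Then the set associated with the decreasing sequence (m, m−1, …, j) satisfies W_{m(m−1)⋯j} = V_m, and the set associated with the increasing sequence (m, m+1, …, i) satisfies W_{m(m+1)⋯i} = V_m. -/
/-!
For `p ∉ {q, r}`, conjugation by `s = (q r)` carries `V_{(p q)}` onto `V_{(p r)}`, so the
inclusion `V_{(q r)} ⊆ V_{(p q)} ∪ s V_{(p q)}` only says that a Weyl line transverse to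
`H_{(q r)}` cannot lie in `H_{(p q)} ∩ H_{(p r)} ⊆ H_{(q r)}`. For adjacent indices this gives
`(c+1)·V_c = V_{c+1}` and `c·V_{c+1} = V_c`, and both sequences collapse to `V_m` one letter
at a time.
-/

namespace TLpaper

section Permutations

variable {k : Type} {n : ℕ}

lemma IsTransposition.inv_mul_mul {α : Type} [DecidableEq α] {t : Equiv.Perm α}
    (ht : IsTransposition t) (σ : Equiv.Perm α) : IsTransposition (σ⁻¹ * t * σ) := by
  obtain ⟨a, b, hab, rfl⟩ := ht
  refine ⟨σ⁻¹ a, σ⁻¹ b, σ⁻¹.injective.ne hab, ?_⟩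
  rw [Equiv.swap_apply_apply, inv_inv]

lemma mem_permSet {σ : Equiv.Perm (Fin (n + 1))} {W : Set (Fin (n + 1) → k)}
    {x : Fin (n + 1) → k} : x ∈ permSet k n σ W ↔ x ∘ ⇑σ⁻¹ ∈ W := by
  refine ⟨?_, fun h => ⟨x ∘ ⇑σ⁻¹, h, by ext; simp⟩⟩
  rintro ⟨z, hz, rfl⟩
  simpa [Function.comp_def] using hz

lemma permSet_permSet (σ τ : Equiv.Perm (Fin (n + 1))) (W : Set (Fin (n + 1) → k)) :
    permSet k n τ (permSet k n σ W) = permSet k n (σ * τ) W := by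
  simp only [permSet, Set.image_image]
  rfl

lemma permSet_one (W : Set (Fin (n + 1) → k)) : permSet k n 1 W = W := by
  simp [permSet]

lemma permSet_mono (σ : Equiv.Perm (Fin (n + 1))) {W W' : Set (Fin (n + 1) → k)}
    (h : W ⊆ W') : permSet k n σ W ⊆ permSet k n σ W' :=
  Set.image_mono h

end Permutations

section WeylLines

variable {k : Type} [Field k] {n : ℕ}

lemma mem_Hyp_swap {a b : Fin (n + 1)} {x : Fin (n + 1) → k} :
    x ∈ Hyp k n (Equiv.swap a b) ↔ (∑ i, x i) = 0 ∧ x a = x b := by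
  refine ⟨fun ⟨hsum, hx⟩ => ⟨hsum, by simpa using hx b⟩,
    fun ⟨hsum, hab⟩ => ⟨hsum, fun i => ?_⟩⟩
  rcases eq_or_ne i a with rfl | hia
  · simp [hab]
  rcases eq_or_ne i b with rfl | hib
  · simp [hab]
  · rw [Equiv.swap_apply_of_ne_of_ne hia hib]

lemma Hyp_swap_inter_subset (p q r : Fin (n + 1)) :
    Hyp k n (Equiv.swap p q) ∩ Hyp k n (Equiv.swap p r) ⊆ Hyp k n (Equiv.swap q r) := by
  rintro x ⟨hpq, hpr⟩
  rw [mem_Hyp_swap] at hpq hpr ⊢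
  exact ⟨hpq.1, hpq.2.symm.trans hpr.2⟩

lemma comp_mem_Hyp_iff (σ t : Equiv.Perm (Fin (n + 1))) (x : Fin (n + 1) → k) :
    x ∘ ⇑σ ∈ Hyp k n t ↔ x ∈ Hyp k n (σ * t * σ⁻¹) := by
  simp only [Hyp, Set.mem_ofPred_eq, Function.comp_apply, Equiv.sum_comp σ x]
  exact and_congr_right fun _ =>
    ⟨fun h i => by simpa using h (σ⁻¹ i), fun h i => by simpa using h (σ i)⟩

lemma IsWeylLine.permSet {L : Set (Fin (n + 1) → k)} (hL : IsWeylLine k n L)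
    (σ : Equiv.Perm (Fin (n + 1))) : IsWeylLine k n (permSet k n σ L) := by
  obtain ⟨⟨v, hv, rfl⟩, T, hT, hLT⟩ := hL
  refine ⟨⟨v ∘ ⇑σ, fun h => hv ?_, ?_⟩, (fun t => σ⁻¹ * t * σ) '' T, ?_, ?_⟩
  · ext i
    simpa using congrFun h (σ⁻¹ i)
  · rw [TLpaper.permSet, ← Set.range_comp]
    rfl
  · rintro _ ⟨t, ht, rfl⟩
    exact (hT t ht).inv_mul_mul σ
  · ext x
    rw [mem_permSet, hLT]
    simp only [Set.mem_inter_iff, Set.mem_ofPred_eq, Set.mem_iInter, Set.biInter_image,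
      comp_mem_Hyp_iff, inv_inv, Function.comp_apply, Equiv.sum_comp]

lemma permSet_Vt_subset (σ t : Equiv.Perm (Fin (n + 1))) :
    permSet k n σ (Vt k n t) ⊆ Vt k n (σ⁻¹ * t * σ) := by
  rintro _ ⟨x, hx, rfl⟩
  simp only [Vt, Set.mem_iUnion, Set.mem_ofPred_eq, exists_prop] at hx ⊢
  obtain ⟨L, ⟨hL, hLt⟩, hxL⟩ := hx
  refine ⟨permSet k n σ L, ⟨hL.permSet σ, fun hσL => hLt fun z hz => ?_⟩,
    ⟨x, hxL, rfl⟩⟩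
  simpa [comp_mem_Hyp_iff, mul_assoc] using hσL ⟨z, hz, rfl⟩

lemma permSet_Vt (σ t : Equiv.Perm (Fin (n + 1))) :
    permSet k n σ (Vt k n t) = Vt k n (σ⁻¹ * t * σ) := by
  refine (permSet_Vt_subset σ t).antisymm ?_
  calc Vt k n (σ⁻¹ * t * σ)
      = permSet k n σ (permSet k n σ⁻¹ (Vt k n (σ⁻¹ * t * σ))) := by
        rw [permSet_permSet, inv_mul_cancel, permSet_one]
    _ ⊆ permSet k n σ (Vt k n t) := by
        refine permSet_mono σ ((permSet_Vt_subset σ⁻¹ _).trans_eq ?_)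
        simp [mul_assoc]

lemma Vt_swap_subset_union (p q r : Fin (n + 1)) :
    Vt k n (Equiv.swap q r) ⊆ Vt k n (Equiv.swap p q) ∪ Vt k n (Equiv.swap p r) := by
  intro x hx
  simp only [Vt, Set.mem_union, Set.mem_iUnion, Set.mem_ofPred_eq, exists_prop] at hx ⊢
  obtain ⟨L, ⟨hL, hLqr⟩, hxL⟩ := hx
  by_cases hLpq : L ⊆ Hyp k n (Equiv.swap p q)
  · exact .inr ⟨L, ⟨hL, fun hLpr => hLqr ((Set.subset_inter hLpq hLpr).trans
      (Hyp_swap_inter_subset p q r))⟩, hxL⟩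
  · exact .inl ⟨L, ⟨hL, hLpq⟩, hxL⟩

lemma Vt_swap_subset_union_permSet {p q r : Fin (n + 1)} (hpq : p ≠ q) (hpr : p ≠ r) :
    Vt k n (Equiv.swap q r) ⊆
      Vt k n (Equiv.swap p q) ∪ permSet k n (Equiv.swap q r) (Vt k n (Equiv.swap p q)) := by
  rw [permSet_Vt, Equiv.swap_inv, Equiv.swap_mul_swap_mul_swap hpq hpr, Equiv.swap_comm r p]
  exact Vt_swap_subset_union p q r

end WeylLines

section Sequences

variable {k : Type} [Field k] {n : ℕ}

lemma ofNat_ne_ofNat {a b : ℕ} (ha : a ≤ n) (hb : b ≤ n) (hab : a ≠ b) :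
    Fin.ofNat (n + 1) a ≠ Fin.ofNat (n + 1) b := by
  simpa [Fin.ext_iff, Nat.mod_eq_of_lt (Nat.lt_succ_of_le ha),
    Nat.mod_eq_of_lt (Nat.lt_succ_of_le hb)] using hab

lemma dotAct_eq_Vi {a : ℕ} {W : Set (Fin (n + 1) → k)}
    (h : Vi k n a ⊆ W ∪ permSet k n (simple n a) W) : dotAct k n a W = Vi k n a :=
  Set.inter_eq_left.mpr h

lemma dotAct_succ_Vi {c : ℕ} (hc : c + 2 ≤ n) :
    dotAct k n (c + 1) (Vi k n c) = Vi k n (c + 1) :=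
  dotAct_eq_Vi <| Vt_swap_subset_union_permSet
    (ofNat_ne_ofNat (by omega) (by omega) (by omega))
    (ofNat_ne_ofNat (by omega) (by omega) (by omega))

lemma dotAct_Vi_succ {c : ℕ} (hc : c + 2 ≤ n) :
    dotAct k n c (Vi k n (c + 1)) = Vi k n c := by
  have hsub := Vt_swap_subset_union_permSet (k := k)
    (p := Fin.ofNat (n + 1) (c + 2)) (q := Fin.ofNat (n + 1) (c + 1)) (r := Fin.ofNat (n + 1) c)
    (ofNat_ne_ofNat hc (by omega) (by omega)) (ofNat_ne_ofNat hc (by omega) (by omega))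
  rw [Equiv.swap_comm _ (Fin.ofNat (n + 1) c),
    Equiv.swap_comm (Fin.ofNat (n + 1) (c + 2))] at hsub
  exact dotAct_eq_Vi hsub

lemma seqSet_cons_of_ne_nil (a : ℕ) {l : List ℕ} (hl : l ≠ []) :
    seqSet k n (a :: l) = dotAct k n a (seqSet k n l) := by
  obtain ⟨b, l, rfl⟩ := List.exists_cons_of_ne_nil hl
  rfl

lemma seqSet_reverse_range' (j d : ℕ) (h : j + d < n) :
    seqSet k n (List.range' j (d + 1)).reverse = Vi k n (j + d) := by
  induction d with
  | zero => simp [seqSet]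
  | succ d ih =>
    rw [List.range'_concat, List.reverse_append, List.reverse_singleton, List.singleton_append,
      seqSet_cons_of_ne_nil _ (by simp), ih (by omega), one_mul]
    exact dotAct_succ_Vi (c := j + d) (by omega)

lemma seqSet_range' (m d : ℕ) (h : m + d < n) :
    seqSet k n (List.range' m (d + 1)) = Vi k n m := by
  induction d generalizing m with
  | zero => simp [seqSet]
  | succ d ih =>
    rw [List.range'_succ, seqSet_cons_of_ne_nil _ (by simp), ih (m + 1) (by omega)]
    exact dotAct_Vi_succ (by omega)

end Sequences

variable (k : Type) [Field k] [CharZero k] (n : ℕ)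

/-- (0-indexed) Let `j ≤ m ≤ i < n`.  Then the set associated with the
decreasing sequence `(m, m−1, …, j)` equals `V_m`, and the set associated with the
increasing sequence `(m, m+1, …, i)` equals `V_m`. -/
theorem seqSet_decreasing_and_increasing (j m i : ℕ)
    (hjm : j ≤ m) (hmi : m ≤ i) (hin : i < n) :
    seqSet k n ((List.range' j (m + 1 - j)).reverse) = Vi k n m ∧
    seqSet k n (List.range' m (i + 1 - m)) = Vi k n m := by
  constructor
  · rw [show m + 1 - j = m - j + 1 by omega, seqSet_reverse_range' j (m - j) (by omega),
      Nat.add_sub_cancel' hjm]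
  · rw [show i + 1 - m = i - m + 1 by omega, seqSet_range' m (i - m) (by omega)]

end TLpaper
end
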